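/- Let u be a C² function on the closure of ℝⁿ₊ solving the anisotropic minimal surface equation div(Df(Du)) = 0 on ℝⁿ₊ and satisfying the free boundary condition in the anisotropic sense. Then for every point x = (0, x′) ∈ ∂ℝⁿ₊ one has the identity ⟨DF(ν(x)), ν̄(x)⟩ = ( √(1+|Du(x)|²) / √(1+|D′u(x)|²) )·F(ν(x)), and consequently ⟨DF(ν(x)), ν̄(x)⟩ ≥ m_F, where ν(x) := (−Du(x), 1)/√(1+|Du(x)|²), D′u denotes the gradient of u in the boundary directions x₂, …, xₙ, and ν̄(x) := (0, −D′u(x), 1)/√(1+|D′u(x)|²). -/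

import Mathlib

open scoped RealInnerProductSpace
open Metric Set MeasureTheory

noncomputable section

/-- `ℝⁿ` as a Euclidean space. -/
abbrev En (n : ℕ) : Type := EuclideanSpace ℝ (Fin n)

/-- Embed `(x, t) ∈ ℝⁿ × ℝ` as the point `(x, t)` of `ℝ^{n+1}` (last coordinate `t`). -/
def app {n : ℕ} (x : En n) (t : ℝ) : En (n+1) :=
  (EuclideanSpace.equiv (Fin (n+1)) ℝ).symm
    (fun i => if h : (i : ℕ) < n then x ⟨i, h⟩ else t)

/-- The Hessian (second derivative) of `F` at `z` evaluated at `(V, V)`. -/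
def hess {m : ℕ} (F : En m → ℝ) (z V : En m) : ℝ :=
  iteratedFDeriv ℝ 2 F z ![V, V]

/-- A uniformly elliptic integrand on `ℝ^{n+1}`: positive and `C²` away from the
origin, positively `1`-homogeneous, with Hessian uniformly positive definite on
tangent directions to the unit sphere. -/
structure UEI (n : ℕ) (F : En (n+1) → ℝ) : Prop where
  smooth : ContDiffOn ℝ 2 F {(0 : En (n+1))}ᶜ
  pos : ∀ z : En (n+1), z ≠ 0 → 0 < F z
  homog : ∀ t : ℝ, 0 < t → ∀ z : En (n+1), z ≠ 0 → F (t • z) = t * F z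
  elliptic : ∃ lam : ℝ, 0 < lam ∧ ∀ z V : En (n+1),
    ‖z‖ = 1 → ⟪V, z⟫ = 0 → ‖V‖ = 1 → lam ≤ hess F z V

/-- `m_F`, the minimum of `F` on the unit sphere. -/
def mF {n : ℕ} (F : En (n+1) → ℝ) : ℝ := sInf (F '' sphere 0 1)

/-- `M_F`, the maximum of `F` on the unit sphere. -/
def MF {n : ℕ} (F : En (n+1) → ℝ) : ℝ := sSup (F '' sphere 0 1)

/-- `f(y) := F(-y, 1)`. -/
def fF {n : ℕ} (F : En (n+1) → ℝ) : En n → ℝ := fun y => F (app (-y) 1)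

/-- The open half-space `ℝⁿ₊ = {x : x₁ > 0}`. -/
def half (n : ℕ) [NeZero n] : Set (En n) := {x | 0 < x 0}

/-- The closed half-space (closure of `ℝⁿ₊`). -/
def chalf (n : ℕ) [NeZero n] : Set (En n) := {x | 0 ≤ x 0}

/-- The boundary hyperplane `∂ℝⁿ₊ = {x₁ = 0}`. -/
def bdryH (n : ℕ) [NeZero n] : Set (En n) := {x | x 0 = 0}

/-- The gradient `Du`, computed within the closed half-space. -/
def Du {n : ℕ} [NeZero n] (u : En n → ℝ) (x : En n) : En n :=
  (InnerProductSpace.toDual ℝ (En n)).symm (fderivWithin ℝ u (chalf n) x)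

/-- Euclidean divergence of a vector field on `ℝⁿ`. -/
def dvg {n : ℕ} (V : En n → En n) (x : En n) : ℝ :=
  ∑ i : Fin n, fderiv ℝ V x (EuclideanSpace.single i 1) i

/-- The anisotropic minimal surface equation `div (Df(Du)) = 0` on `ℝⁿ₊`. -/
def AMSE {n : ℕ} [NeZero n] (F : En (n+1) → ℝ) (u : En n → ℝ) : Prop :=
  ∀ x ∈ half n, dvg (fun y => gradient (fF F) (Du u y)) x = 0

/-- The free boundary condition in the anisotropic sense:
`⟨Df(Du(x)), e₁⟩ = 0` on `∂ℝⁿ₊`. -/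
def FreeBdry {n : ℕ} [NeZero n] (F : En (n+1) → ℝ) (u : En n → ℝ) : Prop :=
  ∀ x ∈ bdryH n, ⟪gradient (fF F) (Du u x), EuclideanSpace.single 0 1⟫ = 0

/-- The graphical area element `W = √(1 + |Du|²)`. -/
def Wel {n : ℕ} [NeZero n] (u : En n → ℝ) (x : En n) : ℝ :=
  Real.sqrt (1 + ‖Du u x‖ ^ 2)

/-- The anisotropic graphical area element `W_f = f(Du)`. -/
def Wf {n : ℕ} [NeZero n] (F : En (n+1) → ℝ) (u : En n → ℝ) (x : En n) : ℝ :=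
  fF F (Du u x)

/-- The tangential (boundary-direction) part of `Du`: `(0, D′u)`. -/
def tgt {n : ℕ} [NeZero n] (u : En n → ℝ) (x : En n) : En n :=
  Du u x - (Du u x 0) • EuclideanSpace.single 0 1

/-- The upward unit normal `ν(x) = (-Du(x), 1)/√(1+|Du(x)|²)` of the graph of `u`. -/
def nuG {n : ℕ} [NeZero n] (u : En n → ℝ) (x : En n) : En (n+1) :=
  (Real.sqrt (1 + ‖Du u x‖ ^ 2))⁻¹ • app (-(Du u x)) 1

/-- The outer unit co-normal `ν̄(x) = (0, -D′u(x), 1)/√(1+|D′u(x)|²)` of `∂Σ` in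
`∂ℝ^{n+1}_+`. -/
def nubar {n : ℕ} [NeZero n] (u : En n → ℝ) (x : En n) : En (n+1) :=
  (Real.sqrt (1 + ‖tgt u x‖ ^ 2))⁻¹ • app (-(tgt u x)) 1

lemma app_apply {n : ℕ} (x : En n) (t : ℝ) (i : Fin (n+1)) :
    app x t i = if h : (i : ℕ) < n then x ⟨i, h⟩ else t := rfl

lemma inner_gradient_eq {m : ℕ} (f : En m → ℝ) (x v : En m) :
    ⟪gradient f x, v⟫ = fderiv ℝ f x v := by
  rw [gradient]; exact InnerProductSpace.toDual_symm_apply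

lemma app_decomp {n : ℕ} (x y : En n) (t : ℝ) : app (x + y) t = app x t + app y 0 := by
  ext i
  simp only [app_apply, PiLp.add_apply]
  split <;> simp

lemma app_smul {n : ℕ} (c : ℝ) (y : En n) : app (c • y) 0 = c • app y 0 := by
  ext i
  simp only [app_apply, PiLp.smul_apply, smul_eq_mul]
  split <;> simp

lemma app_norm_sq {n : ℕ} (x : En n) (t : ℝ) : ‖app x t‖ ^ 2 = ‖x‖ ^ 2 + t ^ 2 := by
  rw [← real_inner_self_eq_norm_sq, ← real_inner_self_eq_norm_sq]
  simp only [PiLp.inner_apply, RCLike.inner_apply, conj_trivial]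
  rw [Fin.sum_univ_castSucc]
  have h1 : ∀ i : Fin n, app x t i.castSucc = x i := by
    intro i
    rw [app_apply]
    simp [Fin.castSucc, i.isLt]
  have h2 : app x t (Fin.last n) = t := by
    rw [app_apply]; simp
  simp only [h1, h2]
  ring

def Jmap (n : ℕ) : En n →L[ℝ] En (n+1) :=
  LinearMap.toContinuousLinearMap
  { toFun := fun x => app x 0
    map_add' := fun a b => app_decomp a b 0
    map_smul' := fun c a => app_smul c a }

lemma Jmap_apply {n : ℕ} (x : En n) : Jmap n x = app x 0 := rfl

lemma Jmap_single {n : ℕ} [NeZero n] :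
    Jmap n (EuclideanSpace.single (0 : Fin n) 1) = EuclideanSpace.single (0 : Fin (n+1)) 1 := by
  ext i
  rw [Jmap_apply, app_apply]
  rcases Nat.lt_or_ge (i : ℕ) n with h | h
  · rw [dif_pos h]
    simp only [EuclideanSpace.single_apply]
    by_cases h0 : (i : ℕ) = 0
    · rw [if_pos (by exact Fin.ext h0), if_pos (by exact Fin.ext h0)]
    · rw [if_neg (fun hc => h0 (by have h' := congrArg Fin.val hc; rw [Fin.val_zero] at h'; exact h')),
        if_neg (fun hc => h0 (by have h' := congrArg Fin.val hc; rw [Fin.val_zero] at h'; exact h'))]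
  · rw [dif_neg (Nat.not_lt.2 h)]
    have : (i : ℕ) ≠ 0 := by have := NeZero.pos n; omega
    rw [EuclideanSpace.single_apply, if_neg (fun hc => this (by have h' := congrArg Fin.val hc; rw [Fin.val_zero] at h'; exact h'))]

lemma diffF {n : ℕ} {F : En (n+1) → ℝ} (hF : UEI n F) {z : En (n+1)} (hz : z ≠ 0) :
    DifferentiableAt ℝ F z :=
  (hF.smooth.contDiffAt (isOpen_compl_singleton.mem_nhds hz)).differentiableAt (by norm_num)

lemma euler {n : ℕ} {F : En (n+1) → ℝ} (hF : UEI n F) {z : En (n+1)} (hz : z ≠ 0) :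
    fderiv ℝ F z z = F z := by
  have hsc : HasDerivAt (fun t : ℝ => t • z) z 1 := by
    simpa using (hasDerivAt_id (1:ℝ)).smul_const z
  have h1 : HasDerivAt (fun t : ℝ => F (t • z)) (fderiv ℝ F z z) 1 := by
    have hd : DifferentiableAt ℝ F ((1:ℝ) • z) := by rw [one_smul]; exact diffF hF hz
    have := (hd.hasFDerivAt).comp_hasDerivAt 1 hsc
    rw [one_smul] at this
    exact this
  have hev : (fun t : ℝ => F (t • z)) =ᶠ[nhds 1] fun t : ℝ => t * F z := by
    filter_upwards [Ioi_mem_nhds (zero_lt_one)] with t ht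
    exact hF.homog t ht z hz
  have h2 : HasDerivAt (fun t : ℝ => t * F z) (fderiv ℝ F z z) 1 :=
    h1.congr_of_eventuallyEq hev.symm
  have h3 : HasDerivAt (fun t : ℝ => t * F z) (F z) 1 := by
    simpa using (hasDerivAt_id (1:ℝ)).mul_const (F z)
  exact h2.unique h3

lemma fderiv_homog {n : ℕ} {F : En (n+1) → ℝ} (hF : UEI n F) {z : En (n+1)} (hz : z ≠ 0)
    {t : ℝ} (ht : 0 < t) : fderiv ℝ F (t • z) = fderiv ℝ F z := by
  have htz : t • z ≠ 0 := smul_ne_zero ht.ne' hz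
  have hsm : HasFDerivAt (fun w : En (n+1) => t • w)
      (t • ContinuousLinearMap.id ℝ (En (n+1))) z := (hasFDerivAt_id z).const_smul t
  have h1 : HasFDerivAt (fun w => F (t • w))
      ((fderiv ℝ F (t • z)).comp (t • ContinuousLinearMap.id ℝ (En (n+1)))) z :=
    ((diffF hF htz).hasFDerivAt).comp z hsm
  have hev : (fun w => F (t • w)) =ᶠ[nhds z] fun w => t * F w := by
    filter_upwards [isOpen_compl_singleton.mem_nhds hz] with w hw
    exact hF.homog t ht w hw
  have h2 : HasFDerivAt (fun w => t * F w)
      ((fderiv ℝ F (t • z)).comp (t • ContinuousLinearMap.id ℝ (En (n+1)))) z :=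
    h1.congr_of_eventuallyEq hev.symm
  have h3 : HasFDerivAt (fun w => t * F w) (t • fderiv ℝ F z) z :=
    ((diffF hF hz).hasFDerivAt).const_mul t
  have h4 := h2.unique h3
  ext v
  have := congrArg (fun L : En (n+1) →L[ℝ] ℝ => L v) h4
  simp only [ContinuousLinearMap.comp_apply, ContinuousLinearMap.smul_apply,
    ContinuousLinearMap.id_apply, smul_eq_mul, _root_.map_smul] at this ⊢
  exact mul_left_cancel₀ ht.ne' this

lemma hasFDerivAt_app_neg {n : ℕ} (p : En n) :
    HasFDerivAt (fun y : En n => app (-y) 1) (-(Jmap n)) p := by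
  have heq : (fun y : En n => app (-y) 1) = fun y => app 0 1 - Jmap n y := by
    funext y
    have := app_decomp 0 (-y) 1
    rw [zero_add] at this
    rw [this, Jmap_apply]
    have h2 : app (-y) 0 = -app y 0 := by
      have := app_smul (-1) y
      simpa using this
    rw [h2]
    abel
  rw [heq]
  exact (Jmap n).hasFDerivAt.const_sub (app 0 1)


set_option maxHeartbeats 1000000 in
/-- **Lower bound for `⟨μ_F, -e₁⟩ = ⟨DF(ν), ν̄⟩` on the boundary** (Lemma 4.4):
under the anisotropic free boundary condition,
`⟨DF(ν), ν̄⟩ = (√(1+|Du|²)/√(1+|D′u|²)) F(ν) ≥ m_F` on `∂ℝⁿ₊`. -/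
theorem stmt14 (n : ℕ) [NeZero n] (hn : 2 ≤ n) (F : En (n+1) → ℝ) (hF : UEI n F)
    (u : En n → ℝ) (hu : ContDiffOn ℝ 2 u (chalf n))
    (hAMSE : AMSE F u) (hFB : FreeBdry F u) :
    ∀ x ∈ bdryH n,
      ⟪gradient F (nuG u x), nubar u x⟫
        = Real.sqrt (1 + ‖Du u x‖ ^ 2) / Real.sqrt (1 + ‖tgt u x‖ ^ 2)
            * F (nuG u x) ∧
      mF F ≤ ⟪gradient F (nuG u x), nubar u x⟫ := by
  intro x hx
  set p : En n := Du u x with hp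
  set q : En n := tgt u x with hq
  set W : ℝ := Real.sqrt (1 + ‖p‖ ^ 2) with hW
  set Wt : ℝ := Real.sqrt (1 + ‖q‖ ^ 2) with hWt
  set z : En (n+1) := app (-p) 1 with hz0
  have hW2 : W ^ 2 = 1 + ‖p‖ ^ 2 := Real.sq_sqrt (by positivity)
  have hWpos : 0 < W := Real.sqrt_pos.2 (by positivity)
  have hWtpos : 0 < Wt := Real.sqrt_pos.2 (by positivity)
  have hzsq : ‖z‖ ^ 2 = ‖p‖ ^ 2 + 1 := by
    rw [hz0, app_norm_sq]; simp
  have hzne : z ≠ 0 := by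
    intro h
    rw [h, norm_zero] at hzsq
    nlinarith [sq_nonneg ‖p‖]
  have hznorm : ‖z‖ = W := by
    have h1 : ‖z‖ = Real.sqrt (‖z‖ ^ 2) := (Real.sqrt_sq (norm_nonneg z)).symm
    rw [h1, hzsq, add_comm]
  have hν : nuG u x = W⁻¹ • z := rfl
  have hνnorm : ‖nuG u x‖ = 1 := by
    rw [hν, norm_smul, hznorm, norm_inv, Real.norm_eq_abs, abs_of_pos hWpos]
    field_simp
  have hνne : nuG u x ≠ 0 := by
    intro h; rw [h, norm_zero] at hνnorm; norm_num at hνnorm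
  -- gradient of F at ν applied to v equals fderiv F z v
  have hgrad : ∀ v : En (n+1), ⟪gradient F (nuG u x), v⟫ = fderiv ℝ F z v := by
    intro v
    rw [inner_gradient_eq, hν, fderiv_homog hF hzne (inv_pos.2 hWpos)]
  -- free boundary gives vanishing of first component
  have hfFd : HasFDerivAt (fF F) ((fderiv ℝ F z).comp (-(Jmap n))) p := by
    have := ((diffF hF hzne).hasFDerivAt).comp p (hasFDerivAt_app_neg p)
    exact this
  have hFB0 : fderiv ℝ (fF F) p (EuclideanSpace.single (0 : Fin n) 1) = 0 := by
    have := hFB x hx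
    rwa [inner_gradient_eq] at this
  have he0 : fderiv ℝ F z (EuclideanSpace.single (0 : Fin (n+1)) 1) = 0 := by
    rw [hfFd.fderiv] at hFB0
    simp only [ContinuousLinearMap.comp_apply, ContinuousLinearMap.neg_apply,
      Jmap_single, map_neg, neg_eq_zero] at hFB0
    exact hFB0
  -- decomposition of the conormal direction
  have hq1 : q = p - (p 0) • EuclideanSpace.single (0 : Fin n) 1 := rfl
  have hdq : app (-q) 1 = z + (p 0) • EuclideanSpace.single (0 : Fin (n+1)) 1 := by
    have h1 : -q = -p + (p 0) • EuclideanSpace.single (0 : Fin n) 1 := by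
      rw [hq1]; abel
    rw [h1, app_decomp, app_smul, ← Jmap_apply, Jmap_single, hz0]
  have hnubar : nubar u x
      = Wt⁻¹ • (z + (p 0) • EuclideanSpace.single (0 : Fin (n+1)) 1) := by
    rw [← hdq]; rfl
  -- the key computation
  have hmain : ⟪gradient F (nuG u x), nubar u x⟫ = Wt⁻¹ * F z := by
    rw [hnubar, real_inner_smul_right, inner_add_right, real_inner_smul_right,
      hgrad, hgrad, euler hF hzne, he0]
    ring
  have hFν : F (nuG u x) = W⁻¹ * F z := by
    rw [hν]; exact hF.homog W⁻¹ (inv_pos.2 hWpos) z hzne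
  have heq : ⟪gradient F (nuG u x), nubar u x⟫ = W / Wt * F (nuG u x) := by
    rw [hmain, hFν]
    field_simp
  refine ⟨heq, ?_⟩
  -- the inequality
  have hb : BddBelow (F '' sphere (0 : En (n+1)) 1) := by
    refine ⟨0, ?_⟩
    rintro y ⟨w, hw, rfl⟩
    have hwne : w ≠ 0 := by
      intro h
      rw [mem_sphere_zero_iff_norm, h, norm_zero] at hw
      norm_num at hw
    exact (hF.pos w hwne).le
  have h1 : mF F ≤ F (nuG u x) :=
    csInf_le hb ⟨nuG u x, mem_sphere_zero_iff_norm.2 hνnorm, rfl⟩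
  have hFνpos : 0 < F (nuG u x) := hF.pos _ hνne
  have hq2 : ‖q‖ ^ 2 ≤ ‖p‖ ^ 2 := by
    rw [hq1]
    have hns := norm_sub_sq_real p ((p 0) • EuclideanSpace.single (0 : Fin n) 1)
    have hin : ⟪p, (p 0) • EuclideanSpace.single (0 : Fin n) 1⟫ = (p 0) * (p 0) := by
      rw [real_inner_smul_right, EuclideanSpace.inner_single_right]
      simp
    have hnn : ‖(p 0) • EuclideanSpace.single (0 : Fin n) (1:ℝ)‖ = |p 0| := by
      rw [norm_smul, EuclideanSpace.norm_single]
      simp [Real.norm_eq_abs]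
    rw [hin, hnn] at hns
    rw [hns]
    nlinarith [sq_abs (p 0)]
  have hWtW : Wt ≤ W := Real.sqrt_le_sqrt (by linarith)
  have hdiv : 1 ≤ W / Wt := (one_le_div hWtpos).2 hWtW
  calc mF F ≤ F (nuG u x) := h1
    _ ≤ W / Wt * F (nuG u x) := le_mul_of_one_le_left hFνpos.le hdiv
    _ = ⟪gradient F (nuG u x), nubar u x⟫ := heq.symm
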